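/- For every a ∈ ℝ² in the closed first quadrant with a₁ ≥ a₂ (i.e., a₁ ≥ a₂ ≥ 0) and every integer k ≥ 1, N_k(Σ₅, a) ≤ 6k + 8, where Σ₅ = {A₂, A₄}. -/

import Mathlib

open Matrix Set

noncomputable section

/-- `XSeq S a k` is the set of all vectors `T_{k-1} ⋯ T_0 · a` with each `T_j ∈ S`
(and `XSeq S a 0 = {a}`). -/
def XSeq {n : ℕ} (S : Set (Matrix (Fin n) (Fin n) ℝ)) (a : Fin n → ℝ) : ℕ → Set (Fin n → ℝ)
  | 0 => {a}
  | k + 1 => ⋃ A ∈ S, A.mulVec '' XSeq S a k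

/-- `PHull S a k` is the convex hull of `XSeq S a k`. -/
def PHull {n : ℕ} (S : Set (Matrix (Fin n) (Fin n) ℝ)) (a : Fin n → ℝ) (k : ℕ) :
    Set (Fin n → ℝ) :=
  convexHull ℝ (XSeq S a k)

/-- `EPts S a k` is the set of extreme points of `PHull S a k`. -/
def EPts {n : ℕ} (S : Set (Matrix (Fin n) (Fin n) ℝ)) (a : Fin n → ℝ) (k : ℕ) :
    Set (Fin n → ℝ) :=
  Set.extremePoints ℝ (PHull S a k)

/-- `NExt S a k` is the number of extreme points of `PHull S a k`. -/
def NExt {n : ℕ} (S : Set (Matrix (Fin n) (Fin n) ℝ)) (a : Fin n → ℝ) (k : ℕ) : ℕ :=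
  (EPts S a k).ncard

def M1 : Matrix (Fin 2) (Fin 2) ℝ := !![0, 1; 1, 0]
def M2 : Matrix (Fin 2) (Fin 2) ℝ := !![1, 1; 0, 1]
def M3 : Matrix (Fin 2) (Fin 2) ℝ := !![1, 0; 1, 1]
def M4 : Matrix (Fin 2) (Fin 2) ℝ := !![1, 1; 1, 0]
def M5 : Matrix (Fin 2) (Fin 2) ℝ := !![0, 1; 1, 1]

/-! Every point of `X_k` lies in the convex hull of the at most `2k + 2` images of `a` under
the words `A₂^β A₄^α` and `A₄ A₂^β A₄^α` of length `k`. One more step preserves this: the only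
new words outside that family are `A₂ A₄ A₂^β A₄^α` and `A₄ A₄ A₂^β A₄^α` with `β ≥ 1`, and
because `A₄` keeps `A₄^α a` in the cone `0 ≤ x₁ ≤ x₀`, their images lie between two vertical
segments whose endpoints are words of the family of length `k + 1`. So `P_k` is the hull of
the family, and `N_k ≤ 2k + 2`. -/

theorem mem_segment_of_forall_ne_eq {𝕜 ι E : Type*} [Semiring 𝕜] [PartialOrder 𝕜]
    [AddCommMonoid E] [Module 𝕜 E] {v₁ v₂ w : ι → E} {i : ι}
    (hv₁ : ∀ j ≠ i, v₁ j = w j) (hv₂ : ∀ j ≠ i, v₂ j = w j)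
    (hi : w i ∈ segment 𝕜 (v₁ i) (v₂ i)) : w ∈ segment 𝕜 v₁ v₂ := by
  obtain ⟨a, b, ha, hb, hab, hw⟩ := hi
  refine ⟨a, b, ha, hb, hab, funext fun j => ?_⟩
  by_cases hj : j = i
  · subst hj; exact hw
  · simp only [Pi.add_apply, Pi.smul_apply, hv₁ j hj, hv₂ j hj, Convex.combo_self hab]

theorem Convex.mem_of_between_vertical_segments {s : Set (Fin 2 → ℝ)} (hs : Convex ℝ s)
    {v₁ v₂ v₃ v₄ w : Fin 2 → ℝ} (h₁ : v₁ ∈ s) (h₂ : v₂ ∈ s) (h₃ : v₃ ∈ s) (h₄ : v₄ ∈ s)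
    (h₁₂ : v₁ 0 = v₂ 0) (h₃₄ : v₃ 0 = v₄ 0) (hx : w 0 ∈ Icc (v₁ 0) (v₃ 0))
    (hy₁₂ : w 1 ∈ Icc (v₁ 1) (v₂ 1)) (hy₃₄ : w 1 ∈ Icc (v₃ 1) (v₄ 1)) : w ∈ s := by
  have hL : ![v₁ 0, w 1] ∈ s := hs.segment_subset h₁ h₂ <|
    mem_segment_of_forall_ne_eq (i := 1) (by simp [Fin.forall_fin_two])
      (by simp [Fin.forall_fin_two, h₁₂]) (by simpa using Icc_subset_segment hy₁₂)
  have hR : ![v₃ 0, w 1] ∈ s := hs.segment_subset h₃ h₄ <|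
    mem_segment_of_forall_ne_eq (i := 1) (by simp [Fin.forall_fin_two])
      (by simp [Fin.forall_fin_two, h₃₄]) (by simpa using Icc_subset_segment hy₃₄)
  exact hs.segment_subset hL hR <|
    mem_segment_of_forall_ne_eq (i := 0) (by simp [Fin.forall_fin_two])
      (by simp [Fin.forall_fin_two]) (by simpa using Icc_subset_segment hx)

section XSeq

variable {n : ℕ} {S : Set (Matrix (Fin n) (Fin n) ℝ)} {a : Fin n → ℝ}

theorem mulVec_mem_XSeq_succ {A : Matrix (Fin n) (Fin n) ℝ} (hA : A ∈ S) {k : ℕ}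
    {x : Fin n → ℝ} (hx : x ∈ XSeq S a k) : A *ᵥ x ∈ XSeq S a (k + 1) :=
  mem_biUnion hA ⟨x, hx, rfl⟩

theorem pow_mulVec_mem_XSeq {A : Matrix (Fin n) (Fin n) ℝ} (hA : A ∈ S) {k : ℕ}
    {x : Fin n → ℝ} (hx : x ∈ XSeq S a k) (m : ℕ) : A ^ m *ᵥ x ∈ XSeq S a (k + m) := by
  induction m with
  | zero => simpa using hx
  | succ m ih => rw [pow_succ', ← mulVec_mulVec]; exact mulVec_mem_XSeq_succ hA ih

theorem XSeq_subset_convexHull (G : ℕ → Set (Fin n → ℝ)) (h₀ : a ∈ convexHull ℝ (G 0))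
    (hG : ∀ k, ∀ A ∈ S, ∀ z ∈ G k, A *ᵥ z ∈ convexHull ℝ (G (k + 1))) (k : ℕ) :
    XSeq S a k ⊆ convexHull ℝ (G k) := by
  induction k with
  | zero => simpa [XSeq] using h₀
  | succ k ih =>
    intro x hx
    obtain ⟨A, hA, y, hy, rfl⟩ : ∃ A ∈ S, ∃ y ∈ XSeq S a k, A *ᵥ y = x := by
      simpa [XSeq] using hx
    have hAG : A.mulVecLin '' convexHull ℝ (G k) ⊆ convexHull ℝ (G (k + 1)) := by
      rw [LinearMap.image_convexHull]
      exact convexHull_min (by rintro _ ⟨z, hz, rfl⟩; exact hG k A hA z hz)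
        (convex_convexHull ℝ _)
    exact hAG ⟨y, ih hy, rfl⟩

theorem NExt_le_ncard {k : ℕ} {s : Set (Fin n → ℝ)} (hs : s.Finite) (hsX : s ⊆ XSeq S a k)
    (hXs : XSeq S a k ⊆ convexHull ℝ s) : NExt S a k ≤ s.ncard := by
  have hP : PHull S a k = convexHull ℝ s :=
    (convexHull_min hXs (convex_convexHull ℝ s)).antisymm (convexHull_mono hsX)
  refine ncard_le_ncard ?_ hs
  rw [EPts, hP]
  exact extremePoints_convexHull_subset

end XSeq

theorem M2_mulVec (v : Fin 2 → ℝ) : M2 *ᵥ v = ![v 0 + v 1, v 1] := by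
  ext i; fin_cases i <;> simp [M2, mulVec, dotProduct]

theorem M4_mulVec (v : Fin 2 → ℝ) : M4 *ᵥ v = ![v 0 + v 1, v 0] := by
  ext i; fin_cases i <;> simp [M4, mulVec, dotProduct]

theorem M2_pow_mulVec (b : ℕ) (v : Fin 2 → ℝ) : M2 ^ b *ᵥ v = ![v 0 + b * v 1, v 1] := by
  induction b with
  | zero => ext i; fin_cases i <;> simp
  | succ b ih =>
    rw [pow_succ', ← mulVec_mulVec, ih, M2_mulVec]
    ext i; fin_cases i <;> simp [add_mul, add_assoc]

theorem M4_pow_mulVec_cone {v : Fin 2 → ℝ} (hv : 0 ≤ v 1 ∧ v 1 ≤ v 0) (n : ℕ) :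
    0 ≤ (M4 ^ n *ᵥ v) 1 ∧ (M4 ^ n *ᵥ v) 1 ≤ (M4 ^ n *ᵥ v) 0 := by
  induction n with
  | zero => simpa using hv
  | succ n ih =>
    rw [pow_succ', ← mulVec_mulVec, M4_mulVec]
    simp only [cons_val_zero, cons_val_one]
    constructor <;> linarith

theorem mulVec_M4_M2_pow_mem_convexHull {u : Fin 2 → ℝ} (hu : 0 ≤ u 1 ∧ u 1 ≤ u 0) (b : ℕ)
    {A : Matrix (Fin 2) (Fin 2) ℝ} (hA : A ∈ ({M2, M4} : Set (Matrix (Fin 2) (Fin 2) ℝ))) :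
    A *ᵥ (M4 *ᵥ (M2 ^ (b + 1) *ᵥ u)) ∈ convexHull ℝ
      {M2 ^ (b + 3) *ᵥ u, M4 *ᵥ (M2 ^ (b + 2) *ᵥ u),
        M2 ^ (b + 1) *ᵥ (M4 *ᵥ (M4 *ᵥ u)), M4 *ᵥ (M2 ^ b *ᵥ (M4 *ᵥ (M4 *ᵥ u)))} := by
  -- With `u = (p, q)` and `B = b + 1`, the corners lie on the lines `x = p + (B + 2) q` and
  -- `x = (B + 2) p + (B + 1) q`, and the target is `(2p + (2B + 1) q, p + B q)` or
  -- `(2p + (2B + 1) q, p + (B + 1) q)`.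
  obtain ⟨hq, hqp⟩ := hu
  have hb : (0 : ℝ) ≤ b := b.cast_nonneg
  refine (convex_convexHull ℝ _).mem_of_between_vertical_segments (v₁ := M2 ^ (b + 3) *ᵥ u)
    (v₂ := M4 *ᵥ (M2 ^ (b + 2) *ᵥ u)) (v₃ := M2 ^ (b + 1) *ᵥ (M4 *ᵥ (M4 *ᵥ u)))
    (v₄ := M4 *ᵥ (M2 ^ b *ᵥ (M4 *ᵥ (M4 *ᵥ u))))
    (subset_convexHull ℝ _ (by simp)) (subset_convexHull ℝ _ (by simp))
    (subset_convexHull ℝ _ (by simp)) (subset_convexHull ℝ _ (by simp)) ?_ ?_ ?_ ?_ ?_ <;>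
  rcases hA with rfl | rfl <;>
  simp only [M2_mulVec, M4_mulVec, M2_pow_mulVec, cons_val_zero, cons_val_one, mem_Icc] <;>
  push_cast <;>
  first | ring1 | (constructor <;> nlinarith)

def canonicalPoints (a : Fin 2 → ℝ) (k : ℕ) : Set (Fin 2 → ℝ) :=
  {x | ∃ α β, α + β = k ∧ x = M2 ^ β *ᵥ (M4 ^ α *ᵥ a)} ∪
    {x | ∃ α β, α + β + 1 = k ∧ x = M4 *ᵥ (M2 ^ β *ᵥ (M4 ^ α *ᵥ a))}

theorem canonicalPoints_subset_XSeq (a : Fin 2 → ℝ) (k : ℕ) :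
    canonicalPoints a k ⊆ XSeq {M2, M4} a k := by
  have hM2 : M2 ∈ ({M2, M4} : Set (Matrix (Fin 2) (Fin 2) ℝ)) := mem_insert _ _
  have hM4 : M4 ∈ ({M2, M4} : Set (Matrix (Fin 2) (Fin 2) ℝ)) := mem_insert_of_mem _ rfl
  have hword (α β : ℕ) : M2 ^ β *ᵥ (M4 ^ α *ᵥ a) ∈ XSeq {M2, M4} a (α + β) := by
    simpa using pow_mulVec_mem_XSeq hM2 (pow_mulVec_mem_XSeq hM4 (k := 0) rfl α) β
  rintro x (⟨α, β, rfl, rfl⟩ | ⟨α, β, rfl, rfl⟩)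
  · exact hword α β
  · exact mulVec_mem_XSeq_succ hM4 (hword α β)

section Finite

open Finset

theorem canonicalPoints_subset_finset (a : Fin 2 → ℝ) (k : ℕ) :
    canonicalPoints a k ⊆ ↑(((antidiagonal k).image fun p => M2 ^ p.2 *ᵥ (M4 ^ p.1 *ᵥ a)) ∪
      (antidiagonal (k - 1 : ℕ)).image fun p => M4 *ᵥ (M2 ^ p.2 *ᵥ (M4 ^ p.1 *ᵥ a))) := by
  rintro x (⟨α, β, hk, rfl⟩ | ⟨α, β, hk, rfl⟩) <;> simp only [coe_union, coe_image]
  · exact Or.inl ⟨(α, β), HasAntidiagonal.mem_antidiagonal.2 hk, rfl⟩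
  · exact Or.inr ⟨(α, β), HasAntidiagonal.mem_antidiagonal.2 (by omega), rfl⟩

theorem canonicalPoints_finite (a : Fin 2 → ℝ) (k : ℕ) : (canonicalPoints a k).Finite :=
  (Finset.finite_toSet _).subset (canonicalPoints_subset_finset a k)

theorem ncard_canonicalPoints_le (a : Fin 2 → ℝ) (k : ℕ) :
    (canonicalPoints a k).ncard ≤ 2 * k + 2 := by
  refine (ncard_le_ncard (canonicalPoints_subset_finset a k) (Finset.finite_toSet _)).trans ?_
  rw [ncard_coe_finset]
  refine (Finset.card_union_le _ _).trans ?_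
  have h₁ := (Finset.card_image_le (s := antidiagonal k)
    (f := fun p => M2 ^ p.2 *ᵥ (M4 ^ p.1 *ᵥ a)))
  have h₂ := (Finset.card_image_le (s := antidiagonal (k - 1 : ℕ))
    (f := fun p => M4 *ᵥ (M2 ^ p.2 *ᵥ (M4 ^ p.1 *ᵥ a))))
  rw [Finset.Nat.card_antidiagonal] at h₁ h₂
  omega

end Finite

theorem mulVec_mem_convexHull_canonicalPoints {a : Fin 2 → ℝ} (ha : 0 ≤ a 1 ∧ a 1 ≤ a 0)
    {k : ℕ} {A : Matrix (Fin 2) (Fin 2) ℝ} (hA : A ∈ ({M2, M4} : Set (Matrix (Fin 2) (Fin 2) ℝ)))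
    {z : Fin 2 → ℝ} (hz : z ∈ canonicalPoints a k) :
    A *ᵥ z ∈ convexHull ℝ (canonicalPoints a (k + 1)) := by
  have hpow (m : ℕ) (v : Fin 2 → ℝ) : M4 ^ (m + 1) *ᵥ v = M4 *ᵥ (M4 ^ m *ᵥ v) := by
    rw [pow_succ', mulVec_mulVec]
  rcases hz with ⟨α, β, rfl, rfl⟩ | ⟨α, β, rfl, rfl⟩
  · refine subset_convexHull ℝ _ ?_
    rcases hA with rfl | rfl
    · exact Or.inl ⟨α, β + 1, by omega, by rw [pow_succ', mulVec_mulVec]⟩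
    · exact Or.inr ⟨α, β, rfl, rfl⟩
  rcases β with _ | b
  · refine subset_convexHull ℝ _ ?_
    rcases hA with rfl | rfl
    · exact Or.inl ⟨α + 1, 1, by omega, by simp [hpow]⟩
    · exact Or.inl ⟨α + 2, 0, by omega, by simp [hpow]⟩
  refine convexHull_mono ?_ (mulVec_M4_M2_pow_mem_convexHull (M4_pow_mulVec_cone ha α) b hA)
  simp only [insert_subset_iff, singleton_subset_iff]
  refine ⟨Or.inl ⟨α, b + 3, by omega, rfl⟩, Or.inr ⟨α, b + 2, by omega, rfl⟩,
    Or.inl ⟨α + 2, b + 1, by omega, by simp [hpow]⟩, Or.inr ⟨α + 2, b, by omega, by simp [hpow]⟩⟩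

theorem stmt19_general (a : Fin 2 → ℝ) (ha : 0 ≤ a 1 ∧ a 1 ≤ a 0) (k : ℕ) :
    NExt {M2, M4} a k ≤ 6 * k + 8 := by
  have hX : XSeq {M2, M4} a k ⊆ convexHull ℝ (canonicalPoints a k) :=
    XSeq_subset_convexHull (canonicalPoints a)
      (subset_convexHull ℝ _ (Or.inl ⟨0, 0, rfl, by simp⟩))
      (fun _ _ hA _ hz => mulVec_mem_convexHull_canonicalPoints ha hA hz) k
  calc NExt {M2, M4} a k ≤ (canonicalPoints a k).ncard :=
        NExt_le_ncard (canonicalPoints_finite a k) (canonicalPoints_subset_XSeq a k) hX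
    _ ≤ 2 * k + 2 := ncard_canonicalPoints_le a k
    _ ≤ 6 * k + 8 := by omega

/-- `N_k(Σ₅, a) ≤ 6k + 8` for `a` in the closed first quadrant with `a 0 ≥ a 1` and `k ≥ 1`,
where `Σ₅ = {A₂, A₄}`. -/
theorem stmt19 (a : Fin 2 → ℝ) (ha : 0 ≤ a 1 ∧ a 1 ≤ a 0) (k : ℕ) (hk : 1 ≤ k) :
    NExt {M2, M4} a k ≤ 6 * k + 8 :=
  stmt19_general a ha k

end
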